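/- Every nonempty word on a well-ordered alphabet can be written uniquely as a lexicographically nondecreasing product u = u₁u₂⋯u_r of Lyndon words. -/

import Mathlib

/-!
Existence: start from the factorization into letters and repeatedly merge an adjacent descent
`a > b` into `a ++ b`, which is again Lyndon. Uniqueness: a Lyndon word is larger than each of its
proper suffixes. If the first factor `b` of one factorization were a proper prefix of the first
factor `a` of another, the rest of `a` would be a proper suffix of `a` beginning a product of
factors `≥ b > a`, which is impossible; so the first factors agree.
-/

/-- The lexicographic order of the paper: `u <_lex v` iff `v` is a proper prefix of `u`,
or `u = r ++ x :: s`, `v = r ++ y :: t` with letters `x < y`. -/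
def PLt {X : Type*} [LinearOrder X] (u v : List X) : Prop :=
  (v <+: u ∧ v ≠ u) ∨
    ∃ (r s t : List X) (x y : X), x < y ∧ u = r ++ x :: s ∧ v = r ++ y :: t

def PLe {X : Type*} [LinearOrder X] (u v : List X) : Prop := PLt u v ∨ u = v

/-- A nonempty word is Lyndon iff `u >_lex w ++ v` for every factorization `u = v ++ w`
with `v, w` nonempty. -/
def IsLyndon {X : Type*} [LinearOrder X] (u : List X) : Prop :=
  u ≠ [] ∧ ∀ v w : List X, u = v ++ w → v ≠ [] → w ≠ [] → PLt (w ++ v) u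

section Order

variable {X : Type*}

/-- Appending a letter above the whole alphabet turns `PLt`, where a proper prefix is the larger
word, into the usual lexicographic order; hence `PLt` is a strict total order. -/
def endMarked (u : List X) : List (WithTop X) := u.map WithTop.some ++ [⊤]

theorem endMarked_injective : Function.Injective (endMarked (X := X)) := by
  intro u v h
  simpa [endMarked, List.map_inj_right WithTop.coe_injective] using h

variable [LinearOrder X]

theorem not_plt_nil (v : List X) : ¬ PLt [] v := by
  rintro (⟨h, hne⟩ | ⟨r, s, t, x, y, -, hu, -⟩)
  · exact hne (List.prefix_nil.mp h)
  · simp at hu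

theorem plt_nil_iff {u : List X} : PLt u [] ↔ u ≠ [] := by
  refine ⟨?_, fun h => Or.inl ⟨List.nil_prefix, Ne.symm h⟩⟩
  rintro (⟨-, hne⟩ | ⟨r, s, t, x, y, -, -, hv⟩)
  · exact hne.symm
  · simp at hv

theorem cons_plt_cons_iff {x y : X} {s t : List X} :
    PLt (x :: s) (y :: t) ↔ x < y ∨ (x = y ∧ PLt s t) := by
  constructor
  · rintro (⟨h, hne⟩ | ⟨_ | ⟨z, r⟩, s', t', a, b, hab, hu, hv⟩)
    · obtain ⟨rfl, hts⟩ := List.cons_prefix_cons.mp h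
      exact Or.inr ⟨rfl, Or.inl ⟨hts, by simpa using hne⟩⟩
    · simp only [List.nil_append, List.cons.injEq] at hu hv
      exact Or.inl (hu.1 ▸ hv.1 ▸ hab)
    · simp only [List.cons_append, List.cons.injEq] at hu hv
      exact Or.inr ⟨hu.1.trans hv.1.symm, Or.inr ⟨r, s', t', a, b, hab, hu.2, hv.2⟩⟩
  · rintro (h | ⟨rfl, ⟨h, hne⟩ | ⟨r, s', t', a, b, hab, rfl, rfl⟩⟩)
    · exact Or.inr ⟨[], s, t, x, y, h, rfl, rfl⟩
    · exact Or.inl ⟨List.cons_prefix_cons.mpr ⟨rfl, h⟩, by simpa using hne⟩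
    · exact Or.inr ⟨x :: r, s', t', a, b, hab, rfl, rfl⟩

theorem plt_iff_endMarked_lt {u v : List X} : PLt u v ↔ endMarked u < endMarked v := by
  induction u generalizing v with
  | nil => cases v <;> simp [endMarked, not_plt_nil, List.cons_lt_cons_iff]
  | cons x s ih =>
    cases v <;> simp [endMarked, plt_nil_iff, cons_plt_cons_iff, List.cons_lt_cons_iff, ih]

theorem plt_irrefl (u : List X) : ¬ PLt u u := by
  simp [plt_iff_endMarked_lt]

theorem PLt.trans {u v w : List X} (h₁ : PLt u v) (h₂ : PLt v w) : PLt u w := by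
  rw [plt_iff_endMarked_lt] at *
  exact h₁.trans h₂

theorem PLt.asymm {u v : List X} (h : PLt u v) : ¬ PLt v u :=
  fun h' => plt_irrefl u (h.trans h')

theorem plt_trichotomy (u v : List X) : PLt u v ∨ u = v ∨ PLt v u := by
  simpa only [plt_iff_endMarked_lt, endMarked_injective.eq_iff] using
    lt_trichotomy (endMarked u) (endMarked v)

theorem plt_of_not_ple {u v : List X} (h : ¬ PLe u v) : PLt v u := by
  rcases plt_trichotomy u v with h' | rfl | h'
  exacts [absurd (Or.inl h') h, absurd (Or.inr rfl) h, h']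

theorem PLt.trans_ple {u v w : List X} (h₁ : PLt u v) (h₂ : PLe v w) : PLt u w := by
  rcases h₂ with h₂ | rfl
  exacts [h₁.trans h₂, h₁]

theorem PLe.trans {u v w : List X} (h₁ : PLe u v) (h₂ : PLe v w) : PLe u w := by
  rcases h₁ with h₁ | rfl
  exacts [Or.inl (h₁.trans_ple h₂), h₂]

instance : @Trans (List X) (List X) (List X) PLe PLe PLe := ⟨PLe.trans⟩

theorem ple_of_prefix {u v : List X} (h : v <+: u) : PLe u v := by
  by_cases huv : u = v
  exacts [Or.inr huv, Or.inl (Or.inl ⟨h, Ne.symm huv⟩)]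

theorem plt_append_right {u v : List X} (hv : v ≠ []) : PLt (u ++ v) u :=
  Or.inl ⟨List.prefix_append u v, by simpa using hv⟩

theorem append_plt_append_left_iff (c : List X) {u v : List X} :
    PLt (c ++ u) (c ++ v) ↔ PLt u v := by
  induction c with
  | nil => rfl
  | cons x c ih => simp [cons_plt_cons_iff, ih]

/-- A comparison decided at a letter survives appending arbitrary words. -/
theorem PLt.append_append {u v : List X} (h : PLt u v) (hvu : ¬ v <+: u) (s t : List X) :
    PLt (u ++ s) (v ++ t) := by
  obtain ⟨hpre, -⟩ | ⟨r, s', t', x, y, hxy, rfl, rfl⟩ := h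
  · exact absurd hpre hvu
  · exact Or.inr ⟨r, s' ++ s, t' ++ t, x, y, hxy, by simp, by simp⟩

theorem PLt.append_append_of_length_le {u v : List X} (h : PLt u v)
    (hl : u.length ≤ v.length) (s t : List X) : PLt (u ++ s) (v ++ t) := by
  refine h.append_append (fun hvu => ?_) s t
  obtain rfl := hvu.eq_of_length (le_antisymm hvu.length_le hl)
  exact plt_irrefl v h

end Order

section Lyndon

variable {X : Type*} [LinearOrder X]

theorem IsLyndon.plt_of_append {v w : List X} (h : IsLyndon (v ++ w)) (hv : v ≠ [])
    (hw : w ≠ []) : PLt w (v ++ w) := by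
  have hrot : PLt (w ++ v) (v ++ w) := h.2 v w rfl hv hw
  rcases plt_trichotomy w (v ++ w) with hlt | heq | hgt
  · exact hlt
  · simpa [hv] using congrArg List.length heq
  by_cases hborder : w <+: v ++ w
  · -- `w` is a border: `v ++ w = w ++ m`, and rotating by `v` resp. by `w` gives opposite
    -- comparisons of the equal-length words `v` and `m`.
    obtain ⟨m, hm⟩ := hborder
    have hvm : PLt v m := (append_plt_append_left_iff w).mp (hm ▸ hrot)
    have hlen : v.length = m.length := by
      have := congrArg List.length hm; simp at this; omega
    have hm_ne : m ≠ [] := by simpa [← List.length_eq_zero_iff, ← hlen] using hv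
    have hmw : PLt (m ++ w) (v ++ w) := h.2 w m hm.symm hw hm_ne
    exact absurd (hvm.append_append_of_length_le hlen.le w w) hmw.asymm
  · exact absurd (by simpa using hgt.append_append hborder [] v) hrot.asymm

theorem isLyndon_of_forall_plt {u : List X} (hu : u ≠ [])
    (h : ∀ v w, u = v ++ w → v ≠ [] → w ≠ [] → PLt w u) : IsLyndon u := by
  refine ⟨hu, fun v w huvw hv hw => ?_⟩
  simpa using (h v w huvw hv hw).append_append_of_length_le (by simp [huvw]) v []

theorem isLyndon_singleton (x : X) : IsLyndon [x] := by
  refine isLyndon_of_forall_plt (List.cons_ne_nil x []) fun v w h hv hw =>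
    absurd (congrArg List.length h) ?_
  rw [← List.length_pos_iff] at hv hw
  simp only [List.length_singleton, List.length_append]
  omega

theorem IsLyndon.append {a b : List X} (ha : IsLyndon a) (hb : IsLyndon b) (hba : PLt b a) :
    IsLyndon (a ++ b) := by
  have hb_lt : PLt b (a ++ b) := by
    by_cases hab : a <+: b
    · obtain ⟨c, rfl⟩ := hab
      have hc : c ≠ [] := by rintro rfl; simp [plt_irrefl] at hba
      exact (append_plt_append_left_iff a).mpr (hb.plt_of_append ha.1 hc)
    · simpa using hba.append_append hab [] b
  refine isLyndon_of_forall_plt (by simp [ha.1]) fun v w h hv hw => ?_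
  rcases List.append_eq_append_iff.mp h.symm with ⟨k, rfl, rfl⟩ | ⟨k, rfl, rfl⟩
  · by_cases hk : k = []
    · simpa [hk] using hb_lt
    · simpa using (ha.plt_of_append hv hk).append_append_of_length_le (by simp) b b
  · by_cases hk : k = []
    · simpa [hk] using hb_lt
    · exact (hb.plt_of_append hk hw).trans hb_lt

end Lyndon

section Factorization

variable {X : Type*} [LinearOrder X]

def IsLyndonFactorization (L : List (List X)) : Prop :=
  (∀ w ∈ L, IsLyndon w) ∧ L.IsChain PLe

theorem IsLyndonFactorization.of_cons {a : List X} {L : List (List X)}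
    (h : IsLyndonFactorization (a :: L)) : IsLyndonFactorization L :=
  ⟨fun w hw => h.1 w (List.mem_cons_of_mem a hw), h.2.tail⟩

theorem IsLyndonFactorization.eq_nil_of_flatten_eq_nil {L : List (List X)}
    (hL : IsLyndonFactorization L) (h : L.flatten = []) : L = [] :=
  List.eq_nil_iff_forall_not_mem.mpr fun w hw =>
    (hL.1 w hw).1 (List.flatten_eq_nil_iff.mp h w hw)

/-- Merge an adjacent descent `a > b` into the Lyndon word `a ++ b` until none is left. -/
theorem exists_isLyndonFactorization_flatten_eq (L : List (List X))
    (hL : ∀ w ∈ L, IsLyndon w) : ∃ M, IsLyndonFactorization M ∧ M.flatten = L.flatten := by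
  by_cases hchain : L.IsChain PLe
  · exact ⟨L, ⟨hL, hchain⟩, rfl⟩
  obtain ⟨a, b, p, q, hsplit, hab⟩ : ∃ a b p q, L = p ++ a :: b :: q ∧ ¬ PLe a b := by
    simpa [List.isChain_iff_forall_rel_of_append_cons_cons] using hchain
  subst hsplit
  have hmerged : ∀ w ∈ p ++ (a ++ b) :: q, IsLyndon w := by
    simp only [List.mem_append, List.mem_cons] at hL ⊢
    rintro w (hw | rfl | hw)
    · exact hL w (Or.inl hw)
    · exact (hL a (by simp)).append (hL b (by simp)) (plt_of_not_ple hab)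
    · exact hL w (by simp [hw])
  obtain ⟨M, hM, hflat⟩ := exists_isLyndonFactorization_flatten_eq _ hmerged
  exact ⟨M, hM, by simp [hflat]⟩
termination_by L.length
decreasing_by simp_all

/-- The first factor `m` either extends `p`, so `m ≤ p < v ++ p`, or is a proper prefix of `p`,
leaving the shorter suffix `p = m ++ p'` of the Lyndon word `(v ++ m) ++ p'`. -/
theorem IsLyndon.not_prefix_flatten {v p : List X} (ha : IsLyndon (v ++ p)) (hv : v ≠ [])
    (hp : p ≠ []) {L : List (List X)} (hL : ∀ m ∈ L, PLt (v ++ p) m) : ¬ p <+: L.flatten := by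
  induction L generalizing v p with
  | nil => simpa using hp
  | cons m L ih =>
    intro hpre
    have hp_lt : PLt p (v ++ p) := ha.plt_of_append hv hp
    by_cases hpm : p <+: m
    · exact plt_irrefl _ (((hL m (by simp)).trans_ple (ple_of_prefix hpm)).trans hp_lt)
    obtain ⟨p', rfl⟩ :=
      (List.prefix_or_prefix_of_prefix hpre (List.prefix_append m _)).resolve_left hpm
    have hp' : p' ≠ [] := by rintro rfl; simp at hpm
    refine ih (v := v ++ m) (by simpa using ha) (by simp [hv]) hp' (fun m' hm' => ?_) ?_
    · simpa using hL m' (List.mem_cons_of_mem m hm')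
    · simpa using hpre

theorem IsLyndonFactorization.head_eq_of_prefix {a b : List X} {L M : List (List X)}
    (ha : IsLyndon a) (hM : IsLyndonFactorization (b :: M))
    (hflat : a ++ L.flatten = b ++ M.flatten) (hba : b <+: a) : a = b := by
  by_contra hne
  obtain ⟨a', rfl⟩ := hba
  have ha' : a' ≠ [] := by rintro rfl; simp at hne
  refine ha.not_prefix_flatten (hM.1 b (by simp)).1 ha' (L := M) (fun m hm => ?_) ⟨L.flatten, ?_⟩
  · exact (plt_append_right ha').trans_ple (hM.2.rel_cons hm)
  · simpa using hflat

theorem IsLyndonFactorization.eq_of_flatten_eq {L M : List (List X)}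
    (hL : IsLyndonFactorization L) (hM : IsLyndonFactorization M)
    (hflat : L.flatten = M.flatten) : L = M := by
  induction L generalizing M with
  | nil => exact (hM.eq_nil_of_flatten_eq_nil hflat.symm).symm
  | cons a L ih =>
    cases M with
    | nil => exact hL.eq_nil_of_flatten_eq_nil hflat
    | cons b M =>
      simp only [List.flatten_cons] at hflat
      obtain rfl : a = b := by
        rcases List.prefix_or_prefix_of_prefix (List.prefix_append a L.flatten)
          (hflat ▸ List.prefix_append b M.flatten) with hab | hba
        · exact (hL.head_eq_of_prefix (hM.1 b (by simp)) hflat.symm hab).symm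
        · exact hM.head_eq_of_prefix (hL.1 a (by simp)) hflat hba
      rw [ih hL.of_cons hM.of_cons (List.append_cancel_left hflat)]

end Factorization

theorem lyndon_factorization_unique_general {X : Type*} [LinearOrder X] (u : List X) :
    ∃! L : List (List X), (∀ w ∈ L, IsLyndon w) ∧ L.Chain' PLe ∧ L.flatten = u := by
  obtain ⟨M, hM, hflat⟩ :=
    exists_isLyndonFactorization_flatten_eq (u.map fun x => [x])
      (by simpa using fun x _ => isLyndon_singleton x)
  replace hflat : M.flatten = u := hflat.trans (List.flatMap_singleton' u)
  refine ⟨M, ⟨hM.1, hM.2, hflat⟩, fun N ⟨hN, hchain, hNflat⟩ => ?_⟩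
  exact IsLyndonFactorization.eq_of_flatten_eq ⟨hN, hchain⟩ hM (hNflat.trans hflat.symm)

/-- Every nonempty word can be written uniquely as a lexicographically nondecreasing
product of Lyndon words. -/
theorem lyndon_factorization_unique {X : Type*} [LinearOrder X] (u : List X) (hu : u ≠ []) :
    ∃! L : List (List X), (∀ w ∈ L, IsLyndon w) ∧ L.Chain' PLe ∧ L.flatten = u :=
  lyndon_factorization_unique_general u
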